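/- There exists j_0 ∈ ℕ such that the following holds. Let ε > 0 and s > 5/2, and let {a_j} be a solution of the dyadic Euler model on [0,∞) with a_j(0) > 0 for all j ≥ 0, with ‖a(0)‖_{H^s} < ∞, and such that a_{j'}(0)² > λ_{j'}^{−3−ε} for some j' > j_0. Then the H^{3/2+ε} norm of the solution becomes unbounded in finite time: there exists a finite time T such that sup_{0 ≤ t < T} ‖a(t)‖_{H^{3/2+ε}} = ∞. -/

import Mathlib

/-!
Let `μ = λ^{5/2}` and `θ = μ^{-1/2}`. For `φ(t) = Σ_k a_k(t)` the gain terms of `Σ_k a_k'` add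
up to `μ Σ_k μ^k a_k²`, AM–GM bounds the transfer terms by `θ` times that, and
`|a_k| ≤ θ^k (Σ_j μ^j a_j²)^{1/2}` gives `φ² ≤ (1 - θ)⁻² Σ_k μ^k a_k²`; hence
`φ' ≥ (1 - θ)³ μ φ²`. As long as the `H^s` norm (`s > 5/4`) stays bounded, `a_k = O(λ^{-sk})`
uniformly in time, which justifies differentiating `φ` term by term. Since `φ(0) > 0`, the
Riccati inequality makes `1/φ + (1 - θ)³ μ t` nonincreasing and positive, so the norm cannot stay
bounded beyond time `((1 - θ)³ μ φ(0))⁻¹`.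
-/

open MeasureTheory Filter
open scoped ENNReal

/-- The (possibly infinite) squared `H^s` norm of a sequence, with `λ_j = lam ^ j`:
`‖a‖_{H^s}² = Σ_j λ_j^{2s} a_j²`. -/
noncomputable def Hsq (lam s : ℝ) (a : ℕ → ℝ) : ℝ≥0∞ :=
  ∑' j : ℕ, ENNReal.ofReal ((lam ^ j) ^ (2 * s) * (a j) ^ 2)

/-- A solution of the dyadic Euler model (Friedlander–Pavlović / Katz–Pavlović) on
`[0,∞)`: `a_j' = λ_j^{5/2} a_{j-1}² − λ_{j+1}^{5/2} a_j a_{j+1}`, with `a_{-1} ≡ 0`. -/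
def IsEulerSol (lam : ℝ) (a : ℕ → ℝ → ℝ) : Prop :=
  ∀ j : ℕ, ∀ t ∈ Set.Ici (0 : ℝ),
    HasDerivWithinAt (a j)
      ((lam ^ j) ^ (5 / 2 : ℝ) * (if j = 0 then (0 : ℝ) else a (j - 1) t) ^ 2
        - (lam ^ (j + 1)) ^ (5 / 2 : ℝ) * a j t * a (j + 1) t) (Set.Ici 0) t

open Set

-- The model depends on `λ` only through `μ = λ^{5/2}`, the ratio of consecutive coefficients.
noncomputable def eulerRHS (μ : ℝ) (f : ℕ → ℝ) (k : ℕ) : ℝ :=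
  μ ^ k * (if k = 0 then 0 else f (k - 1)) ^ 2 - μ ^ (k + 1) * f k * f (k + 1)

section Sequences

variable {μ θ : ℝ} {f : ℕ → ℝ}

theorem pos_of_mul_sq_eq_one (hμθ : μ * θ ^ 2 = 1) : 0 < μ := by
  nlinarith [sq_nonneg θ]

theorem abs_eulerRHS_le {C ρ : ℝ} (hμ : 0 ≤ μ) (hρ : 0 < ρ) (hf : ∀ k, |f k| ≤ C * ρ ^ k)
    (k : ℕ) : |eulerRHS μ f k| ≤ C ^ 2 * ((ρ ^ 2)⁻¹ + μ * ρ) * (μ * ρ ^ 2) ^ k := by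
  have hC : 0 ≤ C := by simpa using (abs_nonneg _).trans (hf 0)
  have hprod : ∀ i j, |f i * f j| ≤ C ^ 2 * ρ ^ (i + j) := fun i j => by
    rw [abs_mul, pow_add]
    calc |f i| * |f j| ≤ C * ρ ^ i * (C * ρ ^ j) :=
          mul_le_mul (hf i) (hf j) (abs_nonneg _) (by positivity)
      _ = C ^ 2 * (ρ ^ i * ρ ^ j) := by ring
  have hloss : |μ ^ (k + 1) * f k * f (k + 1)| ≤ C ^ 2 * (μ * ρ) * (μ * ρ ^ 2) ^ k := by
    rw [mul_assoc, abs_mul, abs_of_nonneg (by positivity)]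
    calc μ ^ (k + 1) * |f k * f (k + 1)| ≤ μ ^ (k + 1) * (C ^ 2 * ρ ^ (k + (k + 1))) := by
          gcongr; exact hprod _ _
      _ = _ := by ring
  cases k with
  | zero =>
    simpa [eulerRHS, add_mul, mul_add] using
      hloss.trans (le_add_of_nonneg_left (by positivity))
  | succ m =>
    have hgain : |μ ^ (m + 1) * f m ^ 2| ≤ C ^ 2 * (ρ ^ 2)⁻¹ * (μ * ρ ^ 2) ^ (m + 1) := by
      rw [abs_mul, abs_of_nonneg (by positivity), sq, mul_pow, pow_succ (ρ ^ 2)]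
      calc μ ^ (m + 1) * |f m * f m| ≤ μ ^ (m + 1) * (C ^ 2 * ρ ^ (m + m)) := by
            gcongr; exact hprod _ _
        _ = _ := by field_simp; ring
    simp only [eulerRHS, Nat.add_sub_cancel, Nat.succ_ne_zero, if_false]
    calc _ ≤ _ := abs_sub _ _
      _ ≤ _ := add_le_add hgain hloss
      _ = _ := by ring

theorem summable_pow_mul_sq_of_abs_le {C ρ : ℝ} (hμ : 0 ≤ μ) (hμρ : μ * ρ ^ 2 < 1)
    (hf : ∀ k, |f k| ≤ C * ρ ^ k) : Summable fun k => μ ^ k * f k ^ 2 := by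
  refine .of_nonneg_of_le (fun k => by positivity) (fun k => ?_)
    ((summable_geometric_of_lt_one (by positivity) hμρ).mul_left (C ^ 2))
  have hsq : f k ^ 2 ≤ (C * ρ ^ k) ^ 2 := by
    rw [← sq_abs]; exact pow_le_pow_left₀ (abs_nonneg _) (hf k) 2
  calc μ ^ k * f k ^ 2 ≤ μ ^ k * (C * ρ ^ k) ^ 2 := by gcongr
    _ = C ^ 2 * (μ * ρ ^ 2) ^ k := by ring

theorem hasSum_eulerGain (hS : Summable fun k => μ ^ k * f k ^ 2) :
    HasSum (fun k => μ ^ k * (if k = 0 then 0 else f (k - 1)) ^ 2)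
      (μ * ∑' k, μ ^ k * f k ^ 2) := by
  have h : HasSum (fun k => μ ^ (k + 1) * f k ^ 2) (μ * ∑' k, μ ^ k * f k ^ 2) := by
    simpa only [← mul_assoc, ← pow_succ'] using hS.hasSum.mul_left μ
  simpa using h.zero_add (f := fun k => μ ^ k * (if k = 0 then 0 else f (k - 1)) ^ 2)

theorem abs_eulerLoss_le (hθ : 0 < θ) (hμθ : μ * θ ^ 2 = 1) (k : ℕ) :
    |μ ^ (k + 1) * f k * f (k + 1)|
      ≤ θ / 2 * (μ ^ (k + 1) * f k ^ 2) + θ / 2 * (μ ^ (k + 2) * f (k + 1) ^ 2) := by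
  have hμ := pos_of_mul_sq_eq_one hμθ
  -- AM–GM with the weights `θ` and `θ⁻¹ = θ μ`
  have hamgm : |f k| * |f (k + 1)| ≤ θ / 2 * f k ^ 2 + θ * μ / 2 * f (k + 1) ^ 2 := by
    rw [← sq_abs (f k), ← sq_abs (f (k + 1))]
    have hsq : θ / 2 * |f k| ^ 2 + θ * μ / 2 * |f (k + 1)| ^ 2 - |f k| * |f (k + 1)|
        = θ / 2 * (|f k| - θ * μ * |f (k + 1)|) ^ 2 := by
      linear_combination (|f k| * |f (k + 1)| - θ * μ / 2 * |f (k + 1)| ^ 2) * hμθ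
    nlinarith [mul_nonneg hθ.le (sq_nonneg (|f k| - θ * μ * |f (k + 1)|))]
  rw [mul_assoc, abs_mul, abs_mul, abs_of_pos (by positivity)]
  calc μ ^ (k + 1) * (|f k| * |f (k + 1)|)
      ≤ μ ^ (k + 1) * (θ / 2 * f k ^ 2 + θ * μ / 2 * f (k + 1) ^ 2) := by gcongr
    _ = _ := by ring

theorem tsum_eulerLoss_le (hθ : 0 < θ) (hμθ : μ * θ ^ 2 = 1)
    (hS : Summable fun k => μ ^ k * f k ^ 2) :
    Summable (fun k => μ ^ (k + 1) * f k * f (k + 1)) ∧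
      ∑' k, μ ^ (k + 1) * f k * f (k + 1) ≤ θ * (μ * ∑' k, μ ^ k * f k ^ 2) := by
  have hμ := pos_of_mul_sq_eq_one hμθ
  set S := ∑' k, μ ^ k * f k ^ 2
  have hcur : HasSum (fun k => μ ^ (k + 1) * f k ^ 2) (μ * S) := by
    simpa only [← mul_assoc, ← pow_succ'] using hS.hasSum.mul_left μ
  have hnext : HasSum (fun k => μ ^ (k + 2) * f (k + 1) ^ 2) (μ * (S - f 0 ^ 2)) := by
    have h := (hasSum_nat_add_iff' 1).mpr hS.hasSum
    simpa only [← mul_assoc, ← pow_succ', Finset.sum_range_one, pow_zero, one_mul]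
      using h.mul_left μ
  have hmaj := (hcur.mul_left (θ / 2)).add (hnext.mul_left (θ / 2))
  have hsum : Summable fun k => μ ^ (k + 1) * f k * f (k + 1) :=
    .of_norm_bounded hmaj.summable (abs_eulerLoss_le hθ hμθ)
  refine ⟨hsum, (hasSum_le (fun k => (le_abs_self _).trans (abs_eulerLoss_le hθ hμθ k))
    hsum.hasSum hmaj).trans ?_⟩
  nlinarith [sq_nonneg (f 0)]

theorem abs_le_sqrt_tsum_mul_pow (hμθ : μ * θ ^ 2 = 1) (hθ : 0 ≤ θ)
    (hS : Summable fun k => μ ^ k * f k ^ 2) (k : ℕ) :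
    |f k| ≤ √(∑' k, μ ^ k * f k ^ 2) * θ ^ k := by
  have hμ := pos_of_mul_sq_eq_one hμθ
  have hk : μ ^ k * f k ^ 2 ≤ ∑' k, μ ^ k * f k ^ 2 :=
    hS.le_tsum k fun j _ => by positivity
  rw [← Real.sqrt_sq (pow_nonneg hθ k), ← Real.sqrt_mul' _ (by positivity)]
  apply Real.abs_le_sqrt
  calc f k ^ 2 = μ ^ k * f k ^ 2 * (θ ^ k) ^ 2 := by
        rw [← pow_mul, mul_comm k, pow_mul, mul_right_comm, ← mul_pow, hμθ, one_pow, one_mul]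
    _ ≤ _ := by gcongr

theorem mul_sq_tsum_le_tsum_pow_mul_sq (hμθ : μ * θ ^ 2 = 1) (hθ0 : 0 ≤ θ) (hθ1 : θ < 1)
    (hS : Summable fun k => μ ^ k * f k ^ 2) :
    (1 - θ) ^ 2 * (∑' k, f k) ^ 2 ≤ ∑' k, μ ^ k * f k ^ 2 := by
  have hμ := pos_of_mul_sq_eq_one hμθ
  set S := ∑' k, μ ^ k * f k ^ 2
  have hgeom := (hasSum_geometric_of_lt_one hθ0 hθ1).mul_left √S
  have habs : ‖∑' k, f k‖ ≤ √S * (1 - θ)⁻¹ :=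
    tsum_of_norm_bounded hgeom (abs_le_sqrt_tsum_mul_pow hμθ hθ0 hS)
  have hsq : (∑' k, f k) ^ 2 ≤ (√S * (1 - θ)⁻¹) ^ 2 := by
    rw [← sq_abs]; exact pow_le_pow_left₀ (abs_nonneg _) habs 2
  rw [mul_pow, Real.sq_sqrt (tsum_nonneg fun k => by positivity)] at hsq
  calc (1 - θ) ^ 2 * (∑' k, f k) ^ 2 ≤ (1 - θ) ^ 2 * (S * ((1 - θ)⁻¹) ^ 2) := by gcongr
    _ = S := by field_simp [(sub_pos.mpr hθ1).ne']

theorem mul_sq_tsum_le_tsum_eulerRHS (hθ0 : 0 < θ) (hθ1 : θ < 1) (hμθ : μ * θ ^ 2 = 1)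
    (hS : Summable fun k => μ ^ k * f k ^ 2) :
    (1 - θ) ^ 3 * μ * (∑' k, f k) ^ 2 ≤ ∑' k, eulerRHS μ f k := by
  have hμ := pos_of_mul_sq_eq_one hμθ
  obtain ⟨hloss, hloss_le⟩ := tsum_eulerLoss_le hθ0 hμθ hS
  have hsum := mul_sq_tsum_le_tsum_pow_mul_sq hμθ hθ0.le hθ1 hS
  unfold eulerRHS
  rw [((hasSum_eulerGain hS).sub hloss.hasSum).tsum_eq]
  have h1θ : 0 ≤ 1 - θ := by linarith
  nlinarith [mul_le_mul_of_nonneg_left hsum (mul_nonneg h1θ hμ.le)]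

end Sequences

theorem le_add_inv_of_sq_le_deriv {φ φ' : ℝ → ℝ} {c t₀ T : ℝ} (hc : 0 < c) (hφ₀ : 0 < φ t₀)
    (hcont : ContinuousOn φ (Ico t₀ T)) (hderiv : ∀ t ∈ Ioo t₀ T, HasDerivAt φ (φ' t) t)
    (hriccati : ∀ t ∈ Ioo t₀ T, c * φ t ^ 2 ≤ φ' t) : T ≤ t₀ + (c * φ t₀)⁻¹ := by
  rw [← interior_Ico] at hderiv hriccati
  have hmono : MonotoneOn φ (Ico t₀ T) :=
    monotoneOn_of_deriv_nonneg (convex_Ico t₀ T) hcont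
      (fun t ht => (hderiv t ht).differentiableAt.differentiableWithinAt)
      fun t ht => (hderiv t ht).deriv ▸ (by positivity : 0 ≤ c * φ t ^ 2).trans (hriccati t ht)
  have hpos : ∀ t ∈ Ico t₀ T, 0 < φ t := fun t ht =>
    hφ₀.trans_le (hmono (left_mem_Ico.mpr (ht.1.trans_lt ht.2)) ht ht.1)
  have hanti : AntitoneOn (fun t => (φ t)⁻¹ + c * t) (Ico t₀ T) := by
    have hderiv' : ∀ t ∈ interior (Ico t₀ T),
        HasDerivAt (fun t => (φ t)⁻¹ + c * t) (-φ' t / φ t ^ 2 + c) t := fun t ht =>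
      ((hderiv t ht).inv (hpos t (interior_subset ht)).ne').add
        (by simpa using (hasDerivAt_id t).const_mul c)
    refine antitoneOn_of_deriv_nonpos (convex_Ico t₀ T)
      ((hcont.inv₀ fun t ht => (hpos t ht).ne').add (continuousOn_const.mul continuousOn_id))
      (fun t ht => (hderiv' t ht).differentiableAt.differentiableWithinAt) fun t ht => ?_
    have hφ := hpos t (interior_subset ht)
    rw [(hderiv' t ht).deriv, neg_div, neg_add_nonpos_iff, le_div_iff₀ (by positivity)]
    exact hriccati t ht
  by_contra! hT
  set t₁ := t₀ + (c * φ t₀)⁻¹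
  have ht₁ : t₁ ∈ Ico t₀ T := ⟨le_add_of_nonneg_right (by positivity), hT⟩
  have h := hanti (left_mem_Ico.mpr (ht₁.1.trans_lt hT)) ht₁ ht₁.1
  have hct₁ : c * t₁ = c * t₀ + (φ t₀)⁻¹ := by
    simp only [t₁]; field_simp
  have := inv_pos.mpr (hpos t₁ ht₁)
  simp only at h
  linarith

theorem lifespan_le_of_abs_le {μ θ ρ C T : ℝ} {a : ℕ → ℝ → ℝ} (hθ0 : 0 < θ) (hθ1 : θ < 1)
    (hμθ : μ * θ ^ 2 = 1) (hρ : 0 < ρ) (hμρ : μ * ρ ^ 2 < 1)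
    (hsol : ∀ j, ∀ t ∈ Ici (0 : ℝ),
      HasDerivWithinAt (a j) (eulerRHS μ (fun k => a k t) j) (Ici 0) t)
    (hdecay : ∀ t ∈ Ico 0 T, ∀ k, |a k t| ≤ C * ρ ^ k) (h₀ : 0 < ∑' k, a k 0) :
    T ≤ ((1 - θ) ^ 3 * μ * ∑' k, a k 0)⁻¹ := by
  have hμ : 1 < μ := by nlinarith [pow_lt_one₀ hθ0.le hθ1 two_ne_zero]
  have hρ1 : ρ < 1 := by nlinarith
  have hc : 0 < (1 - θ) ^ 3 * μ := mul_pos (pow_pos (sub_pos.mpr hθ1) 3) (by linarith)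
  have hgeom : Summable fun k => C * ρ ^ k :=
    (summable_geometric_of_lt_one hρ.le hρ1).mul_left C
  have hRHS : Summable fun k => C ^ 2 * ((ρ ^ 2)⁻¹ + μ * ρ) * (μ * ρ ^ 2) ^ k :=
    (summable_geometric_of_lt_one (by positivity) hμρ).mul_left _
  have hcont : ContinuousOn (fun t => ∑' k, a k t) (Ico 0 T) :=
    continuousOn_tsum
      (fun k t ht => (hsol k t ht.1).continuousWithinAt.mono Ico_subset_Ici_self) hgeom
      fun k t ht => hdecay t ht k
  have hderiv : ∀ t ∈ Ioo 0 T,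
      HasDerivAt (fun t => ∑' k, a k t) (∑' k, eulerRHS μ (fun k => a k t) k) t :=
    fun t ht => hasDerivAt_tsum_of_isPreconnected hRHS isOpen_Ioo isPreconnected_Ioo
      (fun k s hs => (hsol k s hs.1.le).hasDerivAt (Ici_mem_nhds hs.1))
      (fun k s hs => abs_eulerRHS_le (by linarith) hρ (hdecay s (Ioo_subset_Ico_self hs)) k) ht
      (.of_norm_bounded hgeom (hdecay t (Ioo_subset_Ico_self ht))) ht
  have hriccati : ∀ t ∈ Ioo 0 T, (1 - θ) ^ 3 * μ * (∑' k, a k t) ^ 2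
      ≤ ∑' k, eulerRHS μ (fun k => a k t) k := fun t ht =>
    mul_sq_tsum_le_tsum_eulerRHS hθ0 hθ1 hμθ
      (summable_pow_mul_sq_of_abs_le (by linarith) hμρ (hdecay t (Ioo_subset_Ico_self ht)))
  simpa only [zero_add] using le_add_inv_of_sq_le_deriv hc h₀ hcont hderiv hriccati

theorem abs_le_of_Hsq_le {lam s : ℝ} {f : ℕ → ℝ} {M : ℝ≥0∞} (hlam : 0 < lam) (hM : M ≠ ⊤)
    (h : Hsq lam s f ≤ M) (k : ℕ) : |f k| ≤ √M.toReal * (lam ^ (-s)) ^ k := by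
  have hk : (lam ^ k) ^ (2 * s) * f k ^ 2 ≤ M.toReal :=
    (ENNReal.ofReal_le_iff_le_toReal hM).mp ((ENNReal.le_tsum k).trans h)
  have hweight : (lam ^ k) ^ (2 * s) * ((lam ^ (-s)) ^ k) ^ 2 = 1 := by
    rw [Real.rpow_pow_comm hlam.le, ← Real.rpow_natCast _ 2, ← Real.rpow_mul (by positivity),
      ← Real.rpow_add (by positivity), show 2 * s + -s * (2 : ℕ) = 0 by push_cast; ring,
      Real.rpow_zero]
  rw [← Real.sqrt_sq (by positivity : 0 ≤ (lam ^ (-s)) ^ k),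
    ← Real.sqrt_mul' _ (by positivity)]
  apply Real.abs_le_sqrt
  calc f k ^ 2 = (lam ^ k) ^ (2 * s) * f k ^ 2 * ((lam ^ (-s)) ^ k) ^ 2 := by
        rw [mul_right_comm, hweight, one_mul]
    _ ≤ _ := by gcongr

theorem IsEulerSol.hasDerivWithinAt_eulerRHS {lam : ℝ} {a : ℕ → ℝ → ℝ} (hlam : 0 ≤ lam)
    (hsol : IsEulerSol lam a) (j : ℕ) (t : ℝ) (ht : t ∈ Ici 0) :
    HasDerivWithinAt (a j) (eulerRHS (lam ^ (5 / 2 : ℝ)) (fun k => a k t) j) (Ici 0) t := by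
  simpa only [eulerRHS, Real.rpow_pow_comm hlam] using hsol j t ht

theorem IsEulerSol.exists_iSup_Hsq_eq_top {lam s : ℝ} {a : ℕ → ℝ → ℝ} (hlam : 1 < lam)
    (hs : 5 / 4 < s) (hsol : IsEulerSol lam a) (hpos : ∀ j, 0 < a j 0) :
    ∃ T : ℝ, 0 < T ∧ (⨆ t ∈ Ico (0 : ℝ) T, Hsq lam s (fun j => a j t)) = ⊤ := by
  have hlam0 : 0 < lam := by linarith
  set μ := lam ^ (5 / 2 : ℝ)
  set θ := lam ^ (-(5 / 4) : ℝ)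
  set ρ := lam ^ (-s)
  have hθ1 : θ < 1 := Real.rpow_lt_one_of_one_lt_of_neg hlam (by norm_num)
  have hρ1 : ρ < 1 := Real.rpow_lt_one_of_one_lt_of_neg hlam (by linarith)
  have hμθ : μ * θ ^ 2 = 1 := by
    rw [← Real.rpow_natCast, ← Real.rpow_mul hlam0.le, ← Real.rpow_add hlam0]
    norm_num
  have hμρ : μ * ρ ^ 2 < 1 := by
    rw [← Real.rpow_natCast, ← Real.rpow_mul hlam0.le, ← Real.rpow_add hlam0]
    exact Real.rpow_lt_one_of_one_lt_of_neg hlam (by push_cast; linarith)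
  by_contra! hfin
  have hdecay : ∀ T, 0 < T → ∀ t ∈ Ico 0 T, ∀ k,
      |a k t| ≤ √(⨆ t ∈ Ico (0 : ℝ) T, Hsq lam s (fun j => a j t)).toReal * ρ ^ k :=
    fun T hT t ht => abs_le_of_Hsq_le hlam0 (hfin T hT)
      (le_biSup (fun t => Hsq lam s fun j => a j t) ht)
  have hsum₀ : Summable fun k => a k 0 :=
    .of_norm_bounded ((summable_geometric_of_lt_one (by positivity) hρ1).mul_left _)
      (hdecay 1 one_pos 0 ⟨le_rfl, one_pos⟩)
  have h₀ : 0 < ∑' k, a k 0 := hsum₀.tsum_pos (fun k => (hpos k).le) 0 (hpos 0)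
  set T := ((1 - θ) ^ 3 * μ * ∑' k, a k 0)⁻¹ + 1
  have hT : 0 < T := by
    have : 0 < 1 - θ := by linarith
    positivity
  have := lifespan_le_of_abs_le (by positivity) hθ1 hμθ (by positivity) hμρ
    (hsol.hasDerivWithinAt_eulerRHS hlam0.le) (hdecay T hT) h₀
  linarith

/-- Friedlander–Pavlović, Katz–Pavlović: there is `j₀` such that any positive
solution of the dyadic Euler model that lies in `H^s` for some `s > 5/2` initially, and
satisfies `a_{j'}(0)² > λ_{j'}^{−3−ε}` for some `j' > j₀`, has its `H^{3/2+ε}` norm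
become unbounded in finite time. -/
theorem euler_dyadic_blowup (lam : ℝ) (hlam : 1 < lam) :
    ∃ j0 : ℕ, ∀ ε s : ℝ, 0 < ε → 5 / 2 < s →
      ∀ a : ℕ → ℝ → ℝ, IsEulerSol lam a →
        (∀ j : ℕ, 0 < a j 0) →
        Hsq lam s (fun j => a j 0) < ⊤ →
        (∃ j' : ℕ, j0 < j' ∧ (lam ^ j') ^ (-3 - ε) < (a j' 0) ^ 2) →
        ∃ T : ℝ, 0 < T ∧
          (⨆ t ∈ Set.Ico (0 : ℝ) T, Hsq lam (3 / 2 + ε) (fun j => a j t)) = ⊤ :=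
  ⟨0, fun ε _ hε _ a hsol hpos _ _ => hsol.exists_iSup_Hsq_eq_top hlam (by linarith) hpos⟩
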